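/- If Z₁,...,Zₙ are i.i.d. random variables, Q is a finite nonempty set of permutations of {1,...,n}, σ* is uniform on Q independent of C = (Z₁,...,Zₙ), and h is a real-valued measurable scoring function on sequences of length n, then for every k ∈ {1,...,|Q|}, the probability that h(C) has rank k (with uniform random tie-breaking) among the multiset {h(σ(σ*)⁻¹C) : σ ∈ Q} equals 1/|Q|. -/

import Mathlib

open MeasureTheory ProbabilityTheory

instance {n : ℕ} (Q : Finset (Equiv.Perm (Fin n))) : MeasurableSpace ↥Q := ⊤
instance {n m : ℕ} (Q : Finset (Equiv.Perm (Fin n))) : MeasurableSpace (↥Q ≃ Fin m) := ⊤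

/-- The sequence `c` permuted by `σ`. -/
def permSeq {n : ℕ} {α : Type*} (σ : Equiv.Perm (Fin n)) (c : Fin n → α) : Fin n → α :=
  fun i => c (σ i)

/-- Rank (starting from 1) of the entry indexed by `i` among the values `H j`,
with ties among equal values broken according to the priorities `p`. -/
noncomputable def tbRank {ι : Type*} [Fintype ι] [DecidableEq ι] (H : ι → ℝ) {m : ℕ}
    (p : ι ≃ Fin m) (i : ι) : ℕ :=
  1 + (Finset.univ.filter (fun j => H j < H i ∨ (H j = H i ∧ p j < p i))).card

/-!
Because the coordinates of `C` are i.i.d., the law `ν` of `C` is invariant under every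
permutation of coordinates. Conditioning on the independent uniform pair `(σ*, tie-break) = (s, t)`,
the rank event is `(s⁻¹ C) ∈ D s t`, where `D s t` is the set of sequences `d` for which
`h (s d)` has rank `k` among `h (σ d)`, `σ ∈ Q`; by invariance it has probability `ν (D s t)`.
For fixed `d` and `t` exactly one `s` has rank `k`, so `∑ s, ν (D s t) = 1`, and averaging over
the uniform `(s, t)` gives `1 / |Q|`.
-/

open Finset Function
open scoped ENNReal

theorem permSeq_eq_piCongrLeft {n : ℕ} {α : Type*} [MeasurableSpace α] (σ : Equiv.Perm (Fin n)) :
    permSeq (α := α) σ = MeasurableEquiv.piCongrLeft (fun _ => α) σ.symm := by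
  funext c i
  simpa [permSeq] using
    (MeasurableEquiv.piCongrLeft_apply_apply (β := fun _ => α) σ.symm c (σ i)).symm

theorem measurable_permSeq {n : ℕ} {α : Type*} [MeasurableSpace α] (σ : Equiv.Perm (Fin n)) :
    Measurable (permSeq (α := α) σ) :=
  measurable_pi_lambda _ fun i => measurable_pi_apply (σ i)

theorem measurePreserving_permSeq_of_iid {Ω α : Type*} [MeasurableSpace Ω] [MeasurableSpace α]
    {μ : Measure Ω} {n : ℕ} {C : Ω → Fin n → α} (hC : Measurable C)
    (hIndep : iIndepFun (fun i ω => C ω i) μ)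
    (hIdent : ∀ i j : Fin n, IdentDistrib (fun ω => C ω i) (fun ω => C ω j) μ μ)
    (σ : Equiv.Perm (Fin n)) :
    MeasurePreserving (permSeq σ) (μ.map C) (μ.map C) := by
  have := hIndep.isProbabilityMeasure
  have hmeas : ∀ i, Measurable fun ω => C ω i := fun i => (measurable_pi_apply i).comp hC
  have (i : Fin n) : IsProbabilityMeasure (μ.map fun ω => C ω i) :=
    Measure.isProbabilityMeasure_map (hmeas i).aemeasurable
  have hlaw : μ.map C = Measure.pi fun i => μ.map (fun ω => C ω i) :=
    hIndep.map_fun_eq_pi_map fun i => (hmeas i).aemeasurable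
  have hcoord : (fun i => μ.map (fun ω => C ω (σ.symm i))) = fun i => μ.map (fun ω => C ω i) :=
    funext fun i => (hIdent _ _).map_eq
  have hpi := measurePreserving_piCongrLeft (fun i => μ.map (fun ω => C ω i)) σ.symm
  rw [hcoord] at hpi
  rwa [hlaw, permSeq_eq_piCongrLeft]

theorem measure_setOf_mem_eq_sum_of_indepFun {Ω β γ : Type*} [MeasurableSpace Ω]
    [MeasurableSpace β] [MeasurableSpace γ] [Fintype γ] [MeasurableSingletonClass γ]
    {μ : Measure Ω} {Y : Ω → β} {X : Ω → γ} (hY : Measurable Y) (hX : Measurable X)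
    (hYX : IndepFun Y X μ) {E : γ → Set β} (hE : ∀ c, MeasurableSet (E c)) :
    μ {ω | Y ω ∈ E (X ω)} = ∑ c, μ (Y ⁻¹' E c) * μ (X ⁻¹' {c}) := by
  have hunion : {ω | Y ω ∈ E (X ω)} = ⋃ c, Y ⁻¹' E c ∩ X ⁻¹' {c} := by
    ext ω; simp
  have hdisj : Pairwise (Disjoint on fun c => Y ⁻¹' E c ∩ X ⁻¹' {c}) := fun c c' hcc' =>
    ((Set.disjoint_singleton.mpr hcc').preimage X).mono Set.inter_subset_right
      Set.inter_subset_right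
  rw [hunion, measure_iUnion hdisj fun c => (hY (hE c)).inter (hX (measurableSet_singleton c)),
    tsum_fintype]
  exact Finset.sum_congr rfl fun c _ =>
    hYX.measure_inter_preimage_eq_mul _ _ (hE c) (measurableSet_singleton c)

theorem sum_measure_eq_one_of_existsUnique {β ι : Type*} [MeasurableSpace β] [Fintype ι]
    {ν : Measure β} [IsProbabilityMeasure ν] {D : ι → Set β} (hD : ∀ i, MeasurableSet (D i))
    (hcover : ∀ b, ∃! i, b ∈ D i) : ∑ i, ν (D i) = 1 := by
  have hdisj : Pairwise (Disjoint on D) := fun i j hij =>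
    Set.disjoint_left.mpr fun b hi hj => hij ((hcover b).unique hi hj)
  have hunion : ⋃ i, D i = Set.univ :=
    Set.eq_univ_of_forall fun b => Set.mem_iUnion.mpr (hcover b).exists
  rw [← tsum_fintype (L := SummationFilter.unconditional ι), ← measure_iUnion hdisj hD, hunion,
    measure_univ]

section TieBreakRank

variable {ι : Type*} [Fintype ι] [DecidableEq ι]

theorem existsUnique_card_filter_lt_eq {L : Type*} [LinearOrder L] {f : ι → L} (hf : Injective f)
    {k : ℕ} (hk : k < Fintype.card ι) : ∃! i, #{j | f j < f i} = k := by
  let r : ι → Fin (Fintype.card ι) := fun i =>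
    ⟨#{j | f j < f i}, Finset.card_lt_univ_of_notMem (x := i) (by simp)⟩
  have hmono {a b : ι} (hab : f a < f b) : r a < r b := by
    refine Finset.card_lt_card (Finset.ssubset_iff_of_subset ?_ |>.mpr ⟨a, ?_, ?_⟩)
    · exact Finset.monotone_filter_right _ fun j _ (hj : f j < f a) => hj.trans hab
    · simpa using hab
    · simp
  have hinj : Injective r := by
    intro a b hab
    by_contra hne
    rcases (hf.ne hne).lt_or_gt with h | h
    exacts [(hmono h).ne hab, (hmono h).ne' hab]
  have hbij : Bijective r := (Fintype.bijective_iff_injective_and_card r).mpr ⟨hinj, by simp⟩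
  simpa [r, Fin.ext_iff] using hbij.existsUnique ⟨k, hk⟩

variable (H : ι → ℝ) {m : ℕ} (p : ι ≃ Fin m)

theorem tbRank_eq_one_add_card_lex (i : ι) :
    tbRank H p i = 1 + #{j | toLex (H j, p j) < toLex (H i, p i)} := by
  simp only [tbRank, Prod.Lex.toLex_lt_toLex]

theorem tbRank_existsUnique {k : ℕ} (hk1 : 1 ≤ k) (hk2 : k ≤ m) : ∃! i, tbRank H p i = k := by
  have hkey : Injective fun i => toLex (H i, p i) := fun a b hab =>
    p.injective (congrArg Prod.snd (toLex.injective hab))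
  have hcard : Fintype.card ι = m := by simp [Fintype.card_congr p]
  obtain ⟨i, hi, huniq⟩ := existsUnique_card_filter_lt_eq hkey (k := k - 1) (by omega)
  refine ⟨i, ?_, fun j hj => huniq j ?_⟩
  · simp only [tbRank_eq_one_add_card_lex]
    omega
  · simp only [tbRank_eq_one_add_card_lex] at hj
    omega

end TieBreakRank

theorem measurable_tbRank {ι β : Type*} [Fintype ι] [DecidableEq ι] [MeasurableSpace β]
    {H : β → ι → ℝ} (hH : ∀ j, Measurable fun b => H b j) {m : ℕ} (p : ι ≃ Fin m) (i : ι) :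
    Measurable fun b => tbRank (H b) p i := by
  simp only [tbRank, Finset.card_filter]
  refine measurable_const.add (Finset.measurable_sum _ fun j _ => ?_)
  refine Measurable.ite ?_ measurable_const measurable_const
  exact (measurableSet_lt (hH j) (hH i)).union
    ((measurableSet_eq_fun (hH j) (hH i)).inter (.const _))

theorem ENNReal.natCast_mul_inv_natCast_mul {a b : ℕ} (hb : b ≠ 0) :
    (b : ℝ≥0∞) * ((a * b : ℕ) : ℝ≥0∞)⁻¹ = 1 / a := by
  rw [← div_eq_mul_inv, Nat.cast_mul, ← ENNReal.mul_div_mul_right 1 a (by exact_mod_cast hb)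
    (ENNReal.natCast_ne_top b), one_mul]

theorem rank_of_hC_uniform_general
    {Ω α : Type*} [MeasurableSpace Ω] [MeasurableSpace α]
    (μ : Measure Ω) [IsProbabilityMeasure μ]
    (n : ℕ) (C : Ω → Fin n → α) (hC : Measurable C)
    (hIndepCoord : iIndepFun (fun i ω => C ω i) μ)
    (hIdent : ∀ i j : Fin n, IdentDistrib (fun ω => C ω i) (fun ω => C ω j) μ μ)
    (h : (Fin n → α) → ℝ) (hh : Measurable h)
    (Q : Finset (Equiv.Perm (Fin n)))
    (S : Ω → ↥Q) (T : Ω → (↥Q ≃ Fin Q.card))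
    (hSTmeas : Measurable (fun ω => (S ω, T ω)))
    (hne : (Finset.univ : Finset (↥Q × (↥Q ≃ Fin Q.card))).Nonempty)
    (hUnif : μ.map (fun ω => (S ω, T ω)) = (PMF.uniformOfFinset Finset.univ hne).toMeasure)
    (hInd : IndepFun C (fun ω => (S ω, T ω)) μ)
    (k : ℕ) (hk1 : 1 ≤ k) (hk2 : k ≤ Q.card) :
    μ {ω | tbRank
        (fun σ : ↥Q => h (permSeq (σ : Equiv.Perm (Fin n))
          (permSeq ((S ω : Equiv.Perm (Fin n)))⁻¹ (C ω))))
        (T ω) (S ω) = k}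
      = 1 / (Q.card : ENNReal) := by
  set ν := μ.map C
  have : IsProbabilityMeasure ν := Measure.isProbabilityMeasure_map hC.aemeasurable
  set D : ↥Q × (↥Q ≃ Fin Q.card) → Set (Fin n → α) := fun st =>
    {d | tbRank (fun σ : ↥Q => h (permSeq (σ : Equiv.Perm (Fin n)) d)) st.2 st.1 = k}
  have hD (st) : MeasurableSet (D st) :=
    measurable_tbRank (fun σ => hh.comp (measurable_permSeq _)) st.2 st.1
      (measurableSet_singleton k)
  have hpart (t : ↥Q ≃ Fin Q.card) : ∑ s, ν (D (s, t)) = 1 :=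
    sum_measure_eq_one_of_existsUnique (fun s => hD (s, t)) fun d =>
      tbRank_existsUnique _ t hk1 hk2
  have hunif (st) : μ ((fun ω => (S ω, T ω)) ⁻¹' {st}) =
      (Fintype.card (↥Q × (↥Q ≃ Fin Q.card)) : ℝ≥0∞)⁻¹ := by
    rw [← Measure.map_apply hSTmeas (measurableSet_singleton st), hUnif,
      PMF.toMeasure_apply_singleton _ _ (measurableSet_singleton st),
      PMF.uniformOfFinset_apply_of_mem (hs := hne) (Finset.mem_univ st), Finset.card_univ]
  calc _ = ∑ st, μ (C ⁻¹' (permSeq (st.1 : Equiv.Perm (Fin n))⁻¹ ⁻¹' D st)) *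
          μ ((fun ω => (S ω, T ω)) ⁻¹' {st}) :=
        measure_setOf_mem_eq_sum_of_indepFun hC hSTmeas hInd fun st =>
          measurable_permSeq _ (hD st)
    _ = ∑ st, ν (D st) * (Fintype.card (↥Q × (↥Q ≃ Fin Q.card)) : ℝ≥0∞)⁻¹ := by
      refine Finset.sum_congr rfl fun st _ => ?_
      rw [hunif, ← Measure.map_apply hC (measurable_permSeq _ (hD st)),
        (measurePreserving_permSeq_of_iid hC hIndepCoord hIdent _).measure_preimage
          (hD st).nullMeasurableSet]
    _ = 1 / Q.card := by
      rw [← Finset.sum_mul, Fintype.sum_prod_type_right]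
      simp only [hpart, Finset.sum_const, Finset.card_univ, nsmul_one, Fintype.card_prod,
        Fintype.card_coe]
      have : Nonempty (↥Q ≃ Fin Q.card) := ⟨Q.equivFin⟩
      exact ENNReal.natCast_mul_inv_natCast_mul Fintype.card_ne_zero

/-- Theorem 1 of the paper: if `Z₁, …, Zₙ` are i.i.d., `σ*` is uniform on a finite nonempty
set `Q` of permutations independent of `C = (Z₁, …, Zₙ)` (as is the tie-breaking), and `h`
is a measurable scoring function, then for every `k ∈ {1, …, |Q|}` the probability that
`h(C)` has rank `k` among `{h(σ (σ*)⁻¹ C) | σ ∈ Q}` equals `1/|Q|`. -/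
theorem rank_of_hC_uniform
    {Ω α : Type*} [MeasurableSpace Ω] [MeasurableSpace α]
    (μ : Measure Ω) [IsProbabilityMeasure μ]
    (n : ℕ) (C : Ω → Fin n → α) (hC : Measurable C)
    (hIndepCoord : iIndepFun (fun i ω => C ω i) μ)
    (hIdent : ∀ i j : Fin n, IdentDistrib (fun ω => C ω i) (fun ω => C ω j) μ μ)
    (h : (Fin n → α) → ℝ) (hh : Measurable h)
    (Q : Finset (Equiv.Perm (Fin n))) (hQ : Q.Nonempty)
    (S : Ω → ↥Q) (T : Ω → (↥Q ≃ Fin Q.card))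
    (hSTmeas : Measurable (fun ω => (S ω, T ω)))
    (hne : (Finset.univ : Finset (↥Q × (↥Q ≃ Fin Q.card))).Nonempty)
    (hUnif : μ.map (fun ω => (S ω, T ω)) = (PMF.uniformOfFinset Finset.univ hne).toMeasure)
    (hInd : IndepFun C (fun ω => (S ω, T ω)) μ)
    (k : ℕ) (hk1 : 1 ≤ k) (hk2 : k ≤ Q.card) :
    μ {ω | tbRank
        (fun σ : ↥Q => h (permSeq (σ : Equiv.Perm (Fin n))
          (permSeq ((S ω : Equiv.Perm (Fin n)))⁻¹ (C ω))))
        (T ω) (S ω) = k}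
      = 1 / (Q.card : ENNReal) :=
  rank_of_hC_uniform_general μ n C hC hIndepCoord hIdent h hh Q S T hSTmeas hne hUnif hInd k hk1 hk2
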